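/- (Key Lemma: translations as almost eigenfunctions.) Fix −1 < ρ < 1, ρ ≠ 0, d ≥ 2, and real numbers u_1,…,u_m. Let Ω_1,…,Ω_m be a measurable partition of ℝ^d, and assume that for each k there are a Borel set Σ_k ⊆ ℝ^d and a Borel map N_k : ℝ^d → ℝ^d with ‖N_k(y)‖ = 1 for y ∈ Σ_k, such that for every x ∈ ℝ^d and every constant vector field v ∈ ℝ^d the Gauss–Green identity holds: ∫_{Ω_k} div_y(v · e^{−‖y−ρx‖²/(2(1−ρ²))}) dy = ∫_{Σ_k} ⟨v, N_k(y)⟩ e^{−‖y−ρx‖²/(2(1−ρ²))} dH^{d−1}(y), with the surface integral absolutely convergent. Define S(⟨v,N⟩)(x) := (1−ρ²)^{−d/2} (2π)^{−d/2} Σ_{k=1}^m u_k ∫_{Σ_k} ⟨v, N_k(y)⟩ e^{−‖y−ρx‖²/(2(1−ρ²))} dH^{d−1}(y). Suppose further that Σ′ ⊆ ℝ^d and N′ : Σ′ → ℝ^d is a unit vector field satisfying the first-variation condition ∇T_ρ(Σ_{k=1}^m u_k 1_{Ω_k})(x) = N′(x) · ‖∇T_ρ(Σ_{k=1}^m u_k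 1_{Ω_k})(x)‖ for all x ∈ Σ′. Then for every v ∈ ℝ^d and every x ∈ Σ′, S(⟨v,N⟩)(x) = −⟨v, N′(x)⟩ · (1/ρ) · ‖∇T_ρ(Σ_{k=1}^m u_k 1_{Ω_k})(x)‖. -/

import Mathlib

open MeasureTheory

noncomputable def gauss (d : ℕ) : Measure (EuclideanSpace ℝ (Fin d)) :=
  volume.withDensity (fun x => ENNReal.ofReal ((2 * Real.pi) ^ (-(d : ℝ) / 2) * Real.exp (-‖x‖ ^ 2 / 2)))

noncomputable def OU (d : ℕ) (ρ : ℝ) (f : EuclideanSpace ℝ (Fin d) → ℝ)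
    (x : EuclideanSpace ℝ (Fin d)) : ℝ :=
  ∫ y, f (ρ • x + Real.sqrt (1 - ρ ^ 2) • y) ∂(gauss d)

noncomputable def Cmat (d m : ℕ) (ρ : ℝ)
    (f g : EuclideanSpace ℝ (Fin d) → (Fin m → ℝ)) : Matrix (Fin m) (Fin m) ℝ :=
  Matrix.of fun i j => ∫ x, f x i * OU d ρ (fun y => g y j) x ∂(gauss d)

def SimplexMap (d m : ℕ) (f : EuclideanSpace ℝ (Fin d) → (Fin m → ℝ)) : Prop :=
  Measurable f ∧ ∀ x, f x ∈ stdSimplex ℝ (Fin m)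

noncomputable def Sset (ρ : ℝ) (m d : ℕ) : Set (Matrix (Fin m) (Fin m) ℝ) :=
  { M | ∃ f g, SimplexMap d m f ∧ SimplexMap d m g ∧ M = Cmat d m ρ f g }

def IsPartition (d m : ℕ) (Ω : Fin m → Set (EuclideanSpace ℝ (Fin d))) : Prop :=
  (∀ i, MeasurableSet (Ω i)) ∧ Pairwise (Function.onFun Disjoint Ω) ∧ (⋃ i, Ω i) = Set.univ

/-- The divergence `div X = Σ_i ∂X_i/∂x_i` of a vector field on `ℝ^d`. -/
noncomputable def diverg (d : ℕ) (X : EuclideanSpace ℝ (Fin d) → EuclideanSpace ℝ (Fin d))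
    (x : EuclideanSpace ℝ (Fin d)) : ℝ :=
  ∑ i, fderiv ℝ X x (EuclideanSpace.single i 1) i

open scoped MeasureTheory

/-!
Substituting `y = ρx + √(1-ρ²) z` turns `T_ρ f(x)` into `f` integrated against the Gaussian
kernel `K(y) = exp (-‖y - ρx‖² / (2(1-ρ²)))`, up to the normalising constant. Differentiating
under the integral sign, `⟪∇T_ρ f(x), v⟫` is `ρ` times that constant times
`∫ f(y) K(y) ⟪y - ρx, v⟫ / (1-ρ²) dy`, and since `div_y (K v) = -K ⟪y - ρx, v⟫ / (1-ρ²)`,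
for `f = Σ u_k 1_{Ω_k}` this integral is `-Σ u_k ∫_{Ω_k} div_y (K v)`, which the Gauss–Green
identity turns into the surface integrals defining `S(⟨v,N⟩)(x)`. The first-variation condition
then reads `⟪∇T_ρ f(x), v⟫ = ‖∇T_ρ f(x)‖ ⟪v, N'(x)⟫`.
-/

open MeasureTheory Real
open scoped RealInnerProductSpace

lemma exp_neg_norm_add_sq_div_le {E : Type*} [SeminormedAddCommGroup E] {s : ℝ} (hs : 0 < s)
    (w : E) {b : E} (hb : ‖b‖ ≤ 1) :
    exp (-‖w + b‖ ^ 2 / (4 * s)) ≤ exp (1 / (4 * s)) * exp (-‖w‖ ^ 2 / (8 * s)) := by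
  have htri : ‖w‖ ≤ ‖w + b‖ + ‖b‖ := by simpa using norm_sub_le (w + b) b
  have hsq : ‖w‖ ^ 2 / 2 - 1 ≤ ‖w + b‖ ^ 2 := by
    nlinarith [pow_le_pow_left₀ (norm_nonneg w) htri 2, sq_nonneg (‖w + b‖ - ‖b‖),
      norm_nonneg b]
  rw [← exp_add, exp_le_exp]
  have : 1 / (4 * s) + -‖w‖ ^ 2 / (8 * s) = -(‖w‖ ^ 2 / 2 - 1) / (4 * s) := by ring
  rw [this]
  gcongr

lemma mul_exp_neg_sq_div_le {s : ℝ} (hs : 0 < s) (t : ℝ) :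
    t * exp (-t ^ 2 / (2 * s)) ≤ exp s * exp (-t ^ 2 / (4 * s)) := by
  have hamgm : t ≤ s + t ^ 2 / (4 * s) := by
    rw [← sub_nonneg]
    have : s + t ^ 2 / (4 * s) - t = (t - 2 * s) ^ 2 / (4 * s) := by field_simp; ring
    rw [this]; positivity
  calc t * exp (-t ^ 2 / (2 * s)) ≤ exp (s + t ^ 2 / (4 * s)) * exp (-t ^ 2 / (2 * s)) := by
        gcongr
        exact le_trans (by linarith [add_one_le_exp t]) (exp_le_exp.2 hamgm)
    _ = exp s * exp (-t ^ 2 / (4 * s)) := by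
        rw [← exp_add, ← exp_add]; congr 1; field_simp; ring

section GaussianKernel

variable {E G : Type*} [NormedAddCommGroup E] [InnerProductSpace ℝ E]
  [NormedAddCommGroup G] [NormedSpace ℝ G]

theorem HasFDerivAt.exp_neg_norm_sq_div {f : G → E} {f' : G →L[ℝ] E} {x : G}
    (hf : HasFDerivAt f f' x) (s : ℝ) :
    HasFDerivAt (fun x => Real.exp (-‖f x‖ ^ 2 / (2 * s)))
      (-(Real.exp (-‖f x‖ ^ 2 / (2 * s)) / s) • (innerSL ℝ (f x)).comp f') x := by
  convert (hf.norm_sq.mul_const (-(2 * s)⁻¹)).exp using 1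
  · ext x; ring_nf
  · ext h
    simp only [FunLike.coe_smul, ContinuousLinearMap.comp_apply, Pi.smul_apply,
      smul_eq_mul]
    ring_nf

theorem hasFDerivAt_exp_neg_norm_sub_sq_div (s : ℝ) (y z : E) :
    HasFDerivAt (fun z => exp (-‖y - z‖ ^ 2 / (2 * s)))
      ((exp (-‖y - z‖ ^ 2 / (2 * s)) / s) • innerSL ℝ (y - z)) z := by
  refine (HasFDerivAt.exp_neg_norm_sq_div ((hasFDerivAt_id z).const_sub y) s).congr_fderiv ?_
  ext h
  simp
  ring

lemma norm_smul_exp_neg_norm_sub_sq_div_smul_innerSL_le {s : ℝ} (hs : 0 < s) {y z z' : E}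
    (hz : z' ∈ Metric.closedBall z 1) (c : ℝ) :
    ‖c • ((exp (-‖y - z'‖ ^ 2 / (2 * s)) / s) • innerSL ℝ (y - z'))‖
      ≤ |c| / s * exp (s + 1 / (4 * s)) * exp (-‖y - z‖ ^ 2 / (2 * (4 * s))) := by
  rw [Metric.mem_closedBall, dist_comm, dist_eq_norm] at hz
  have hw : y - z' = (y - z) + (z - z') := by abel
  have hmom := mul_exp_neg_sq_div_le hs ‖y - z'‖
  have htail := exp_neg_norm_add_sq_div_le hs (y - z) hz
  rw [← hw] at htail
  rw [norm_smul, norm_smul, innerSL_apply_norm, norm_div, norm_of_nonneg (exp_pos _).le,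
    norm_of_nonneg hs.le, Real.norm_eq_abs, exp_add]
  calc |c| * (exp (-‖y - z'‖ ^ 2 / (2 * s)) / s * ‖y - z'‖)
      = |c| / s * (‖y - z'‖ * exp (-‖y - z'‖ ^ 2 / (2 * s))) := by ring
    _ ≤ |c| / s * (exp s * (exp (1 / (4 * s)) * exp (-‖y - z‖ ^ 2 / (8 * s)))) := by
        exact mul_le_mul_of_nonneg_left
          (hmom.trans (mul_le_mul_of_nonneg_left htail (exp_pos s).le)) (by positivity)
    _ = _ := by ring_nf

end GaussianKernel

section Smoothing

variable {E : Type*} [NormedAddCommGroup E] [InnerProductSpace ℝ E] [FiniteDimensional ℝ E]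
  [MeasurableSpace E] [BorelSpace E]

lemma integrable_exp_neg_norm_sub_sq_div {s : ℝ} (hs : 0 < s) (z : E) :
    Integrable (fun y : E => exp (-‖y - z‖ ^ 2 / (2 * s))) := by
  have hc := GaussianFourier.integrable_cexp_neg_mul_sq_norm_add (V := E)
    (b := ((2 * s)⁻¹ : ℝ)) (by simpa using hs) 0 0
  have h0 : Integrable (fun v : E => exp (-‖v‖ ^ 2 / (2 * s))) :=
    hc.norm.congr (.of_forall fun v => by
      simp only [Complex.norm_exp, ← Complex.ofReal_pow, ← Complex.ofReal_neg,
        ← Complex.ofReal_mul, zero_mul, add_zero, Complex.ofReal_re]; ring_nf)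
  exact h0.comp_sub_right z

variable {F : E → ℝ} {B s : ℝ}

lemma integrable_mul_exp_neg_norm_sub_sq_div (hs : 0 < s) (hF : AEStronglyMeasurable F)
    (hB : ∀ᵐ y, |F y| ≤ B) (z : E) :
    Integrable (fun y => F y * exp (-‖y - z‖ ^ 2 / (2 * s))) := by
  refine ((integrable_exp_neg_norm_sub_sq_div hs z).const_mul B).mono'
    (hF.mul (by fun_prop)) (hB.mono fun y hy => ?_)
  rw [norm_mul, norm_of_nonneg (exp_pos _).le]
  gcongr
  exact hy

lemma integrable_smul_exp_neg_norm_sub_sq_div_smul_innerSL (hs : 0 < s)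
    (hF : AEStronglyMeasurable F) (hB : ∀ᵐ y, |F y| ≤ B) (z : E) :
    Integrable (fun y => F y • ((exp (-‖y - z‖ ^ 2 / (2 * s)) / s) • innerSL ℝ (y - z))) := by
  refine ((integrable_exp_neg_norm_sub_sq_div (by positivity : 0 < 4 * s) z).const_mul
    (B / s * exp (s + 1 / (4 * s)))).mono' (hF.smul (by fun_prop)) (hB.mono fun y hy => ?_)
  refine (norm_smul_exp_neg_norm_sub_sq_div_smul_innerSL_le hs
    (Metric.mem_closedBall_self zero_le_one) (F y)).trans ?_
  gcongr

lemma integrable_exp_neg_norm_sub_sq_div_mul_inner (hs : 0 < s) (z v : E) :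
    Integrable (fun y => exp (-‖y - z‖ ^ 2 / (2 * s)) / s * ⟪y - z, v⟫) := by
  simpa [inner_sub_left] using
    (integrable_smul_exp_neg_norm_sub_sq_div_smul_innerSL (F := fun _ => 1) hs
      aestronglyMeasurable_const (B := 1) (by simp) z).apply_continuousLinearMap v

theorem hasFDerivAt_integral_mul_exp_neg_norm_sub_sq_div (hs : 0 < s)
    (hF : AEStronglyMeasurable F) (hB : ∀ᵐ y, |F y| ≤ B) (z : E) :
    HasFDerivAt (fun z => ∫ y, F y * exp (-‖y - z‖ ^ 2 / (2 * s)))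
      (∫ y, F y • ((exp (-‖y - z‖ ^ 2 / (2 * s)) / s) • innerSL ℝ (y - z))) z := by
  refine hasFDerivAt_integral_of_dominated_of_fderiv_le (Metric.closedBall_mem_nhds z one_pos)
    (.of_forall fun z' => hF.mul (by fun_prop))
    (integrable_mul_exp_neg_norm_sub_sq_div hs hF hB z)
    (integrable_smul_exp_neg_norm_sub_sq_div_smul_innerSL hs hF hB z).aestronglyMeasurable
    (hB.mono fun y hy z' hz' => ?_)
    ((integrable_exp_neg_norm_sub_sq_div (by positivity : 0 < 4 * s) z).const_mul
      (B / s * exp (s + 1 / (4 * s))))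
    (.of_forall fun y z' _ => (hasFDerivAt_exp_neg_norm_sub_sq_div s y z').const_mul (F y))
  refine (norm_smul_exp_neg_norm_sub_sq_div_smul_innerSL_le hs hz' (F y)).trans ?_
  gcongr

end Smoothing

section Indicator

variable {α ι : Type*}

lemma abs_sum_mul_indicator_one_le (s : Finset ι) (u : ι → ℝ) (Ω : ι → Set α) (y : α) :
    |∑ k ∈ s, u k * (Ω k).indicator (fun _ => (1 : ℝ)) y| ≤ ∑ k ∈ s, |u k| := by
  refine (Finset.abs_sum_le_sum_abs _ _).trans (Finset.sum_le_sum fun k _ => ?_)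
  rw [abs_mul]
  refine mul_le_of_le_one_right (abs_nonneg _) ?_
  by_cases hy : y ∈ Ω k <;> simp [hy]

lemma integral_sum_mul_indicator_one_mul [MeasurableSpace α] {μ : Measure α} (s : Finset ι)
    (u : ι → ℝ) {Ω : ι → Set α} (hΩ : ∀ k, MeasurableSet (Ω k)) {h : α → ℝ} (hh : Integrable h μ) :
    ∫ y, (∑ k ∈ s, u k * (Ω k).indicator (fun _ => (1 : ℝ)) y) * h y ∂μ
      = ∑ k ∈ s, u k * ∫ y in Ω k, h y ∂μ := by
  simp_rw [Finset.sum_mul, mul_assoc, ← Set.indicator_mul_left, one_mul]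
  rw [integral_finsetSum _ fun k _ => (hh.indicator (hΩ k)).const_mul (u k)]
  simp_rw [integral_const_mul, integral_indicator (hΩ _)]

end Indicator

section Euclidean

variable {d : ℕ}

local notation "E" => EuclideanSpace ℝ (Fin d)

lemma diverg_smul_const {g : E → ℝ} {g' : E →L[ℝ] ℝ} {y : E} (hg : HasFDerivAt g g' y)
    (v : E) : diverg d (fun y => g y • v) y = g' v := by
  simp only [diverg, (hg.smul_const v).fderiv, ContinuousLinearMap.smulRight_apply,
    PiLp.smul_apply, smul_eq_mul]
  conv_rhs => rw [← (EuclideanSpace.basisFun (Fin d) ℝ).sum_repr v]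
  simp [mul_comm]

lemma integral_gauss (f : E → ℝ) :
    ∫ z, f z ∂gauss d = ∫ z, (2 * π) ^ (-(d : ℝ) / 2) * exp (-‖z‖ ^ 2 / 2) * f z := by
  rw [gauss, integral_withDensity_eq_integral_toReal_smul (by fun_prop)
    (.of_forall fun _ => ENNReal.ofReal_lt_top)]
  refine integral_congr_ae (.of_forall fun z => ?_)
  dsimp only
  rw [ENNReal.toReal_ofReal (by positivity), smul_eq_mul]

lemma integral_comp_add_sqrt_smul_gauss {s : ℝ} (hs : 0 < s) (a : E) (f : E → ℝ) :
    ∫ z, f (a + √s • z) ∂gauss d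
      = s ^ (-(d : ℝ) / 2) * (2 * π) ^ (-(d : ℝ) / 2) *
          ∫ y, f y * exp (-‖y - a‖ ^ 2 / (2 * s)) := by
  set Φ : E → ℝ := fun w => (2 * π) ^ (-(d : ℝ) / 2) * exp (-‖w‖ ^ 2 / (2 * s)) * f (a + w)
  have hscale : ∀ z : E, (2 * π) ^ (-(d : ℝ) / 2) * exp (-‖z‖ ^ 2 / 2) * f (a + √s • z)
      = Φ (√s • z) := by
    intro z
    simp only [Φ, norm_smul, Real.norm_eq_abs, abs_of_nonneg (sqrt_nonneg s), mul_pow,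
      sq_sqrt hs.le]
    congr 3
    field_simp
  have hsqrt : |((√s) ^ d)⁻¹| = s ^ (-(d : ℝ) / 2) := by
    rw [abs_of_nonneg (by positivity), sqrt_eq_rpow, ← rpow_natCast, ← rpow_mul hs.le,
      ← rpow_neg hs.le]
    ring_nf
  rw [integral_gauss, integral_congr_ae (.of_forall hscale), Measure.integral_comp_smul volume Φ √s,
    finrank_euclideanSpace_fin, hsqrt, ← integral_sub_right_eq_self Φ a, smul_eq_mul,
    mul_assoc, ← integral_const_mul ((2 * π) ^ (-(d : ℝ) / 2))]
  congr 1
  refine integral_congr_ae (.of_forall fun y => ?_)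
  simp only [Φ, add_sub_cancel]
  ring

lemma OU_eq_integral {ρ : ℝ} (hρ : |ρ| < 1) (f : E → ℝ) (x : E) :
    OU d ρ f x = (1 - ρ ^ 2) ^ (-(d : ℝ) / 2) * (2 * π) ^ (-(d : ℝ) / 2) *
      ∫ y, f y * exp (-‖y - ρ • x‖ ^ 2 / (2 * (1 - ρ ^ 2))) :=
  integral_comp_add_sqrt_smul_gauss (by nlinarith [sq_abs ρ, abs_nonneg ρ]) (ρ • x) f

theorem inner_gradient_OU {ρ : ℝ} (hρ : |ρ| < 1) {F : E → ℝ} (hF : AEStronglyMeasurable F)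
    {B : ℝ} (hB : ∀ᵐ y, |F y| ≤ B) (x v : E) :
    ⟪gradient (OU d ρ F) x, v⟫
      = ρ * ((1 - ρ ^ 2) ^ (-(d : ℝ) / 2) * (2 * π) ^ (-(d : ℝ) / 2)) *
          ∫ y, F y *
            (exp (-‖y - ρ • x‖ ^ 2 / (2 * (1 - ρ ^ 2))) / (1 - ρ ^ 2) * ⟪y - ρ • x, v⟫) := by
  have hs : 0 < 1 - ρ ^ 2 := by nlinarith [sq_abs ρ, abs_nonneg ρ]
  have hsmooth : HasFDerivAt
      (fun x : E => ∫ y, F y * exp (-‖y - ρ • x‖ ^ 2 / (2 * (1 - ρ ^ 2)))) _ x :=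
    (hasFDerivAt_integral_mul_exp_neg_norm_sub_sq_div hs hF hB (ρ • x)).comp x
      ((hasFDerivAt_id x).const_smul ρ)
  rw [inner_gradient_left, funext (OU_eq_integral hρ F), (hsmooth.const_mul _).fderiv]
  simp only [smul_apply, ContinuousLinearMap.comp_apply, smul_eq_mul]
  rw [ContinuousLinearMap.integral_apply
    (integrable_smul_exp_neg_norm_sub_sq_div_smul_innerSL hs hF hB (ρ • x)),
    mul_comm ρ, mul_assoc _ ρ, ← integral_const_mul ρ]
  congr 1
  refine integral_congr_ae (.of_forall fun y => ?_)
  simp only [smul_apply, ContinuousLinearMap.id_apply, innerSL_apply_apply, smul_eq_mul,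
    real_inner_smul_right]
  ring

end Euclidean

theorem translations_as_almost_eigenfunctions_general
    (ρ : ℝ) (hρ₁ : -1 < ρ) (hρ₂ : ρ < 1) (hρ₀ : ρ ≠ 0) (d : ℕ)
    (m : ℕ) (u : Fin m → ℝ)
    (Ω : Fin m → Set (EuclideanSpace ℝ (Fin d))) (hΩ : IsPartition d m Ω)
    (Sig : Fin m → Set (EuclideanSpace ℝ (Fin d)))
    (N : Fin m → EuclideanSpace ℝ (Fin d) → EuclideanSpace ℝ (Fin d))
    (hGG : ∀ (k : Fin m) (x v : EuclideanSpace ℝ (Fin d)),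
      MeasureTheory.Integrable
        (fun y => (inner ℝ v (N k y) : ℝ) * Real.exp (-‖y - ρ • x‖ ^ 2 / (2 * (1 - ρ ^ 2))))
        ((μH[(d : ℝ) - 1]).restrict (Sig k)) ∧
      (∫ y in Ω k,
          diverg d (fun y => Real.exp (-‖y - ρ • x‖ ^ 2 / (2 * (1 - ρ ^ 2))) • v) y)
        = ∫ y in Sig k, (inner ℝ v (N k y) : ℝ) *
            Real.exp (-‖y - ρ • x‖ ^ 2 / (2 * (1 - ρ ^ 2))) ∂(μH[(d : ℝ) - 1]))
    (Sig' : Set (EuclideanSpace ℝ (Fin d)))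
    (N' : EuclideanSpace ℝ (Fin d) → EuclideanSpace ℝ (Fin d))
    (hFirstVar : ∀ x ∈ Sig',
      gradient (OU d ρ (fun y => ∑ k, u k * Set.indicator (Ω k) (fun _ => (1 : ℝ)) y)) x =
        ‖gradient (OU d ρ (fun y => ∑ k, u k * Set.indicator (Ω k) (fun _ => (1 : ℝ)) y)) x‖
          • N' x) :
    ∀ (v : EuclideanSpace ℝ (Fin d)), ∀ x ∈ Sig',
      ((1 - ρ ^ 2) ^ (-(d : ℝ) / 2) * (2 * Real.pi) ^ (-(d : ℝ) / 2) *
          ∑ k, u k * ∫ y in Sig k, (inner ℝ v (N k y) : ℝ) *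
            Real.exp (-‖y - ρ • x‖ ^ 2 / (2 * (1 - ρ ^ 2))) ∂(μH[(d : ℝ) - 1]))
        = -(inner ℝ v (N' x) : ℝ) * (1 / ρ) *
            ‖gradient (OU d ρ (fun y => ∑ k, u k * Set.indicator (Ω k)
              (fun _ => (1 : ℝ)) y)) x‖ := by
  intro v x hx
  have hρ : |ρ| < 1 := abs_lt.2 ⟨hρ₁, hρ₂⟩
  have hs : 0 < 1 - ρ ^ 2 := by nlinarith
  have hF : Measurable fun y => ∑ k, u k * (Ω k).indicator (fun _ => (1 : ℝ)) y :=
    Finset.measurable_sum _ fun k _ => (measurable_const.indicator (hΩ.1 k)).const_mul (u k)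
  have hgrad := inner_gradient_OU hρ hF.aestronglyMeasurable
    (.of_forall (abs_sum_mul_indicator_one_le _ u Ω)) x v
  rw [hFirstVar x hx, real_inner_smul_left, real_inner_comm] at hgrad
  have hGaussGreen : ∀ k, ∫ y in Sig k, ⟪v, N k y⟫ *
        exp (-‖y - ρ • x‖ ^ 2 / (2 * (1 - ρ ^ 2))) ∂(μH[(d : ℝ) - 1])
      = -∫ y in Ω k,
          exp (-‖y - ρ • x‖ ^ 2 / (2 * (1 - ρ ^ 2))) / (1 - ρ ^ 2) * ⟪y - ρ • x, v⟫ := by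
    intro k
    rw [← (hGG k x v).2, ← integral_neg]
    refine integral_congr_ae (.of_forall fun y => ?_)
    rw [diverg_smul_const (g := fun y => exp (-‖y - ρ • x‖ ^ 2 / (2 * (1 - ρ ^ 2))))
      (((hasFDerivAt_id y).sub_const (ρ • x)).exp_neg_norm_sq_div _)]
    simp [neg_div, inner_sub_left, real_inner_smul_left]
  simp_rw [hGaussGreen, mul_neg, Finset.sum_neg_distrib,
    ← integral_sum_mul_indicator_one_mul _ u hΩ.1
      (integrable_exp_neg_norm_sub_sq_div_mul_inner hs (ρ • x) v)]
  rw [show ∀ a b : ℝ, -a * (1 / ρ) * b = -(b * a) / ρ from fun a b => by ring, hgrad,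
    neg_div ρ, mul_assoc ρ, mul_div_cancel_left₀ _ hρ₀]
  ring

theorem translations_as_almost_eigenfunctions
    (ρ : ℝ) (hρ₁ : -1 < ρ) (hρ₂ : ρ < 1) (hρ₀ : ρ ≠ 0) (d : ℕ) (hd : 2 ≤ d)
    (m : ℕ) (u : Fin m → ℝ)
    (Ω : Fin m → Set (EuclideanSpace ℝ (Fin d))) (hΩ : IsPartition d m Ω)
    (Sig : Fin m → Set (EuclideanSpace ℝ (Fin d))) (hSig : ∀ k, MeasurableSet (Sig k))
    (N : Fin m → EuclideanSpace ℝ (Fin d) → EuclideanSpace ℝ (Fin d))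
    (hNmeas : ∀ k, Measurable (N k)) (hNunit : ∀ k, ∀ y ∈ Sig k, ‖N k y‖ = 1)
    (hGG : ∀ (k : Fin m) (x v : EuclideanSpace ℝ (Fin d)),
      MeasureTheory.Integrable
        (fun y => (inner ℝ v (N k y) : ℝ) * Real.exp (-‖y - ρ • x‖ ^ 2 / (2 * (1 - ρ ^ 2))))
        ((μH[(d : ℝ) - 1]).restrict (Sig k)) ∧
      (∫ y in Ω k,
          diverg d (fun y => Real.exp (-‖y - ρ • x‖ ^ 2 / (2 * (1 - ρ ^ 2))) • v) y)
        = ∫ y in Sig k, (inner ℝ v (N k y) : ℝ) *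
            Real.exp (-‖y - ρ • x‖ ^ 2 / (2 * (1 - ρ ^ 2))) ∂(μH[(d : ℝ) - 1]))
    (Sig' : Set (EuclideanSpace ℝ (Fin d)))
    (N' : EuclideanSpace ℝ (Fin d) → EuclideanSpace ℝ (Fin d))
    (hN'unit : ∀ x ∈ Sig', ‖N' x‖ = 1)
    (hFirstVar : ∀ x ∈ Sig',
      gradient (OU d ρ (fun y => ∑ k, u k * Set.indicator (Ω k) (fun _ => (1 : ℝ)) y)) x =
        ‖gradient (OU d ρ (fun y => ∑ k, u k * Set.indicator (Ω k) (fun _ => (1 : ℝ)) y)) x‖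
          • N' x) :
    ∀ (v : EuclideanSpace ℝ (Fin d)), ∀ x ∈ Sig',
      ((1 - ρ ^ 2) ^ (-(d : ℝ) / 2) * (2 * Real.pi) ^ (-(d : ℝ) / 2) *
          ∑ k, u k * ∫ y in Sig k, (inner ℝ v (N k y) : ℝ) *
            Real.exp (-‖y - ρ • x‖ ^ 2 / (2 * (1 - ρ ^ 2))) ∂(μH[(d : ℝ) - 1]))
        = -(inner ℝ v (N' x) : ℝ) * (1 / ρ) *
            ‖gradient (OU d ρ (fun y => ∑ k, u k * Set.indicator (Ω k)
              (fun _ => (1 : ℝ)) y)) x‖ :=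
  translations_as_almost_eigenfunctions_general ρ hρ₁ hρ₂ hρ₀ d m u Ω hΩ Sig N hGG Sig' N' hFirstVar
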